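/- Let R be a TRS and (A, λ, Σ_red) a sound C-labeling for R. For all ground terms s, t with s outermost-rewriting to t, there exists m ≤ cd_A(R) such that lab(top(s)) rewrites to lab(top(t)) by one μ-step with a labeled original rule of the dynamic labeling DL(A,λ,R), followed by exactly m μ-steps with relabeling rules. Consequently, if the context-sensitive TRS DL(A,λ,R) is terminating, then R is outermost ground terminating. -/

import Mathlib

namespace TRSStmt

/-- First-order terms over a signature `F` with arity function `ar` and variables `V`. -/
inductive Tm (F : Type) (ar : F → ℕ) (V : Type) : Type
  | var : V → Tm F ar V
  | app : (f : F) → (Fin (ar f) → Tm F ar V) → Tm F ar V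

variable {F : Type} {ar : F → ℕ} {V W A : Type}

/-- Interpretation of a term in a `Σ`-algebra, given an assignment. -/
def Tm.eval (I : (f : F) → (Fin (ar f) → A) → A) (α : V → A) : Tm F ar V → A
  | .var x => α x
  | .app f ts => I f (fun i => (ts i).eval I α)

/-- Homomorphic extension of a substitution. -/
def Tm.subst (σ : V → Tm F ar W) : Tm F ar V → Tm F ar W
  | .var x => σ x
  | .app f ts => .app f (fun i => (ts i).subst σ)

/-- A variable occurs in a term. -/
def Tm.occurs (x : V) : Tm F ar V → Prop
  | .var y => y = x
  | .app _ ts => ∃ i, (ts i).occurs x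

/-- Subterm at a position (0-indexed). -/
def Tm.subAt : Tm F ar V → List ℕ → Option (Tm F ar V)
  | t, [] => some t
  | .var _, _ :: _ => none
  | .app f ts, i :: p => if h : i < ar f then (ts ⟨i, h⟩).subAt p else none

/-- Replace the subterm at a position. -/
def Tm.replaceAt : Tm F ar V → List ℕ → Tm F ar V → Option (Tm F ar V)
  | _, [], s => some s
  | .var _, _ :: _, _ => none
  | .app f ts, i :: p, s =>
      if h : i < ar f then
        ((ts ⟨i, h⟩).replaceAt p s).map (fun u => .app f (Function.update ts ⟨i, h⟩ u))
      else none

/-- The root symbol of a term (if any). -/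
def Tm.rootSym : Tm F ar V → Option F
  | .var _ => none
  | .app f _ => some f

/-- The function symbol at a position. -/
def Tm.symAt (t : Tm F ar V) (p : List ℕ) : Option F := (t.subAt p).bind Tm.rootSym

/-- A rewrite rule is a pair of terms. -/
abbrev Rule (F : Type) (ar : F → ℕ) (V : Type) := Tm F ar V × Tm F ar V

/-- A set of rules is a TRS: left-hand sides are no variables and
    right-hand side variables occur on the left. -/
def IsTRS (R : Set (Rule F ar V)) : Prop :=
  ∀ lr ∈ R, (∀ x : V, lr.1 ≠ Tm.var x) ∧ ∀ x : V, lr.2.occurs x → lr.1.occurs x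

/-- `t` is a redex with respect to `R`. -/
def IsRedex (R : Set (Rule F ar V)) (t : Tm F ar W) : Prop :=
  ∃ lr ∈ R, ∃ σ : V → Tm F ar W, t = lr.1.subst σ

/-- Rewrite step at position `p`. -/
def RewAt (R : Set (Rule F ar V)) (p : List ℕ) (t u : Tm F ar W) : Prop :=
  ∃ lr ∈ R, ∃ σ : V → Tm F ar W,
    t.subAt p = some (lr.1.subst σ) ∧ t.replaceAt p (lr.2.subst σ) = some u

/-- Outermost rewrite step at position `p`: no redex strictly above `p`. -/
def OutAt (R : Set (Rule F ar V)) (p : List ℕ) (t u : Tm F ar W) : Prop :=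
  RewAt R p t u ∧
    ∀ q, q <+: p → q ≠ p → ∀ s, t.subAt q = some s → ¬ IsRedex R s

/-- Outermost rewrite step. -/
def OStep (R : Set (Rule F ar V)) (t u : Tm F ar W) : Prop := ∃ p, OutAt R p t u

/-- μ-replacing positions for a replacement map `μ`. -/
inductive MuPos (μ : (f : F) → Fin (ar f) → Prop) : Tm F ar V → List ℕ → Prop
  | nil (t : Tm F ar V) : MuPos μ t []
  | cons (f : F) (ts : Fin (ar f) → Tm F ar V) (i : Fin (ar f)) (p : List ℕ) :
      μ f i → MuPos μ (ts i) p → MuPos μ (Tm.app f ts) (i.val :: p)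

/-- Context-sensitive (μ-)rewrite step. -/
def MuStep (R : Set (Rule F ar V)) (μ : (f : F) → Fin (ar f) → Prop)
    (t u : Tm F ar W) : Prop :=
  ∃ p, RewAt R p t u ∧ MuPos μ t p

/-- No infinite sequence for a relation (termination / strong normalization). -/
def NoInf {τ : Type _} (r : τ → τ → Prop) : Prop :=
  ¬ ∃ g : ℕ → τ, ∀ n, r (g n) (g (n + 1))

/-- One-hole contexts. -/
inductive Ctx (F : Type) (ar : F → ℕ) (V : Type) : Type
  | hole : Ctx F ar V
  | app : (f : F) → (i : Fin (ar f)) → ((j : Fin (ar f)) → j ≠ i → Tm F ar V) →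
      Ctx F ar V → Ctx F ar V

/-- Depth of the hole of a context. -/
def Ctx.depth : Ctx F ar V → ℕ
  | .hole => 0
  | .app _ _ _ C => C.depth + 1

/-- Filling the hole of a context with a term. -/
def Ctx.fill : Ctx F ar V → Tm F ar V → Tm F ar V
  | .hole, s => s
  | .app f i ts C, s => .app f (fun j => if h : j = i then C.fill s else ts j h)

/-- The rule `lr` preserves the interpretation inside every context of depth `n`. -/
def HoldsAtDepth (I : (f : F) → (Fin (ar f) → A) → A) (n : ℕ) (lr : Rule F ar V) : Prop :=
  ∀ (C : Ctx F ar V) (α : V → A), C.depth = n →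
    (C.fill lr.1).eval I α = (C.fill lr.2).eval I α

/-- `A` is a C-model for `R`. -/
def IsCModel (I : (f : F) → (Fin (ar f) → A) → A) (R : Set (Rule F ar V)) : Prop :=
  ∀ lr ∈ R, ∃ n, HoldsAtDepth I n lr

/-- `A` is a model for `R`. -/
def IsModel (I : (f : F) → (Fin (ar f) → A) → A) (R : Set (Rule F ar V)) : Prop :=
  ∀ lr ∈ R, ∀ α : V → A, lr.1.eval I α = lr.2.eval I α

section Label
variable {L : F → Type}

/-- Labeled signature: symbols with a label. -/
abbrev LSym (F : Type) (L : F → Type) := Σ f : F, L f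

/-- Arity on the labeled signature. -/
abbrev lar (ar : F → ℕ) : LSym F L → ℕ := fun g => ar g.1

/-- Semantic labeling of a term with respect to an assignment. -/
def labT (I : (f : F) → (Fin (ar f) → A) → A)
    (lf : ∀ f : F, (Fin (ar f) → A) → L f) (α : V → A) :
    Tm F ar V → Tm (LSym F L) (lar ar) V
  | .var x => .var x
  | .app f ts => .app ⟨f, lf f (fun i => (ts i).eval I α)⟩ (fun i => labT I lf α (ts i))

end Label

/-- Evaluation of ground terms. -/
def geval (I : (f : F) → (Fin (ar f) → A) → A) : Tm F ar Empty → A :=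
  Tm.eval I (fun x => x.elim)

/-- Labeling of ground terms. -/
def glab {L : F → Type} (I : (f : F) → (Fin (ar f) → A) → A)
    (lf : ∀ f : F, (Fin (ar f) → A) → L f) :
    Tm F ar Empty → Tm (LSym F L) (lar ar) Empty :=
  labT I lf (fun x => x.elim)

/-- Terms not containing the symbol `tp`. -/
def tpFree (tp : F) : Tm F ar V → Prop
  | .var _ => True
  | .app f ts => f ≠ tp ∧ ∀ i, tpFree tp (ts i)

/-- The term `top(s)`. -/
def topT (tp : F) (s : Tm F ar V) : Tm F ar V := Tm.app tp (fun _ => s)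

/-- Number of occurrences of a variable in a term. -/
def countV [DecidableEq V] (x : V) : Tm F ar V → ℕ
  | .var y => if y = x then 1 else 0
  | .app _ ts => ∑ i, countV x (ts i)

/-- Linear terms: every variable occurs at most once. -/
def Linear [DecidableEq V] (t : Tm F ar V) : Prop := ∀ x : V, countV x t ≤ 1

/-- Quasi-left-linear TRS. -/
def QuasiLeftLinear [DecidableEq V] (R : Set (Rule F ar V)) : Prop :=
  ∀ lr ∈ R, ¬ Linear lr.1 →
    ∃ lr' ∈ R, Linear lr'.1 ∧ ∃ σ : V → Tm F ar V, lr.1 = lr'.1.subst σ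

end TRSStmt

namespace TRSStmt

variable {F : Type} {ar : F → ℕ} {V A : Type} {L : F → Type}

/-- Soundness of a C-labeling `(A, λ, Σ_red)` (with top symbol `tp`):
    a ground `tp`-free term whose labeled root is a redex symbol is a redex. -/
def SoundLab (I : (f : F) → (Fin (ar f) → A) → A)
    (lf : ∀ f : F, (Fin (ar f) → A) → L f) (tp : F)
    (R : Set (Rule F ar V)) (Sred : Set (LSym F L)) : Prop :=
  ∀ t : Tm F ar Empty, tpFree tp t →
    ∀ g ∈ Sred, (glab I lf t).rootSym = some g → IsRedex R t

/-- Completeness of a C-labeling: every ground `tp`-free redex has its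
    labeled root in `Σ_red`. -/
def CompleteLab (I : (f : F) → (Fin (ar f) → A) → A)
    (lf : ∀ f : F, (Fin (ar f) → A) → L f) (tp : F)
    (R : Set (Rule F ar V)) (Sred : Set (LSym F L)) : Prop :=
  ∀ t : Tm F ar Empty, tpFree tp t → IsRedex R t →
    ∃ g ∈ Sred, (glab I lf t).rootSym = some g

/-- A core algebra (relative to the `tp`-free signature `Σ`):
    every element is the interpretation of a ground term over `Σ`. -/
def CoreAlg (I : (f : F) → (Fin (ar f) → A) → A) (tp : F) : Prop :=
  ∀ a : A, ∃ t : Tm F ar Empty, tpFree tp t ∧ geval I t = a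

/-- Prepending the flat context `f(x₁,…,□ at i,…,xₙ)` to a term. -/
def flatExt (f : F) (i : Fin (ar f)) (xs : ∀ j : Fin (ar f), j ≠ i → V)
    (t : Tm F ar V) : Tm F ar V :=
  Tm.app f (fun j => if h : j = i then t else Tm.var (xs j h))

/-- The iterated flat-context extension of rule–assignment pairs
    underlying the dynamic context extension `CE(A,λ,R)`. -/
inductive Reach (I : (f : F) → (Fin (ar f) → A) → A)
    (lf : ∀ f : F, (Fin (ar f) → A) → L f)
    (R : Set (Rule F ar V)) (Sred : Set (LSym F L)) :
    Tm F ar V → Tm F ar V → (V → A) → Prop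
  | base (l r : Tm F ar V) (α : V → A) : (l, r) ∈ R → Reach I lf R Sred l r α
  | step (l r : Tm F ar V) (α : V → A) (f : F) (i : Fin (ar f))
      (xs : ∀ j : Fin (ar f), j ≠ i → V) (α' : V → A) :
      Reach I lf R Sred l r α →
      (l.eval I α ≠ r.eval I α ∨ ∃ x, r = Tm.var x) →
      (∀ j h, ¬ l.occurs (xs j h)) →
      (∀ j h j' h', xs j h = xs j' h' → j = j') →
      (∀ x : V, l.occurs x → α' x = α x) →
      (∀ g ∈ Sred, (labT I lf α' (flatExt f i xs l)).rootSym ≠ some g) →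
      Reach I lf R Sred (flatExt f i xs l) (flatExt f i xs r) α'

/-- The rules of the dynamic context extension `CE(A,λ,R)`:
    labelings of the fully extended rule–assignment pairs. -/
def CE (I : (f : F) → (Fin (ar f) → A) → A)
    (lf : ∀ f : F, (Fin (ar f) → A) → L f)
    (R : Set (Rule F ar V)) (Sred : Set (LSym F L)) :
    Set (Rule (LSym F L) (lar ar) V) :=
  { p | ∃ (l r : Tm F ar V) (α : V → A),
      Reach I lf R Sred l r α ∧ l.eval I α = r.eval I α ∧ (∀ x : V, r ≠ Tm.var x) ∧
      p = (labT I lf α l, labT I lf α r) }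

/-- The replacement map of the transformed system:
    all arguments of redex symbols are frozen. -/
def ceMu (Sred : Set (LSym F L)) : (g : LSym F L) → Fin (lar ar g) → Prop :=
  fun g _ => g ∉ Sred

/-- Outermost ground termination of `R` over the `tp`-free signature `Σ`. -/
def OGTtp (R : Set (Rule F ar V)) (tp : F) : Prop :=
  ¬ ∃ g : ℕ → Tm F ar Empty,
      (∀ n, tpFree tp (g n)) ∧ ∀ n, OStep R (g n) (g (n + 1))

end TRSStmt

namespace TRSStmt

variable {F : Type} {ar : F → ℕ} {V A : Type} {L : F → Type}

/-- Closure generating the value-change pairs (before removing diagonal pairs). -/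
inductive VCpre (I : (f : F) → (Fin (ar f) → A) → A)
    (lf : ∀ f : F, (Fin (ar f) → A) → L f)
    (R : Set (Rule F ar V)) (Sred : Set (LSym F L)) : A → A → Prop
  | base (lr : Rule F ar V) (hlr : lr ∈ R) (α : V → A)
      (hne : lr.1.eval I α ≠ lr.2.eval I α) :
      VCpre I lf R Sred (lr.1.eval I α) (lr.2.eval I α)
  | step (b b' : A) (h : VCpre I lf R Sred b b') (f : F)
      (as : Fin (ar f) → A) (i : Fin (ar f)) (hi : as i = b)
      (hred : (⟨f, lf f as⟩ : LSym F L) ∉ Sred) :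
      VCpre I lf R Sred (I f as) (I f (Function.update as i b'))

/-- The set of value-change pairs `VC(λ,R)` (diagonal pairs removed). -/
def VC (I : (f : F) → (Fin (ar f) → A) → A)
    (lf : ∀ f : F, (Fin (ar f) → A) → L f)
    (R : Set (Rule F ar V)) (Sred : Set (LSym F L)) (b b' : A) : Prop :=
  VCpre I lf R Sred b b' ∧ b ≠ b'

/-- The relation `⤳` on value-change pairs. -/
def Lead (I : (f : F) → (Fin (ar f) → A) → A)
    (lf : ∀ f : F, (Fin (ar f) → A) → L f)
    (R : Set (Rule F ar V)) (Sred : Set (LSym F L)) (p q : A × A) : Prop :=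
  VC I lf R Sred p.1 p.2 ∧ VC I lf R Sred q.1 q.2 ∧
  ∃ (f : F) (as : Fin (ar f) → A) (i : Fin (ar f)),
    as i = p.1 ∧ (⟨f, lf f as⟩ : LSym F L) ∉ Sred ∧
    q.1 = I f as ∧ q.2 = I f (Function.update as i p.2)

end TRSStmt

namespace TRSStmt

variable {F : Type} {ar : F → ℕ} {A : Type} {L : F → Type}

/-- The signature of the dynamic labeling: labeled symbols plus the
    fresh unary relabel symbols `∇_{a,a'}`. -/
abbrev DSym (F : Type) (L : F → Type) (A : Type) := LSym F L ⊕ (A × A)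

/-- Arities for the dynamic labeling signature. -/
abbrev dar (ar : F → ℕ) : DSym F L A → ℕ := Sum.elim (lar ar) (fun _ => 1)

/-- Inclusion of labeled terms into terms over the dynamic labeling signature. -/
def embL {W : Type} : Tm (LSym F L) (lar ar) W → Tm (DSym F L A) (dar ar) W
  | .var x => .var x
  | .app g ts => .app (Sum.inl g) (fun i => embL (ts i))

/-- `∇_{b,b'}(t)`. -/
def nabla {W : Type} (b b' : A) (t : Tm (DSym F L A) (dar ar) W) :
    Tm (DSym F L A) (dar ar) W :=
  Tm.app (Sum.inr (b, b')) (fun _ => t)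

/-- The labeled original rules of the dynamic labeling `DL(A,λ,R)`. -/
def DLorg (I : (f : F) → (Fin (ar f) → A) → A)
    (lf : ∀ f : F, (Fin (ar f) → A) → L f)
    (R : Set (Rule F ar ℕ)) : Set (Rule (DSym F L A) (dar ar) ℕ) :=
  { p | ∃ lr ∈ R, ∃ α : ℕ → A,
      p.1 = embL (labT I lf α lr.1) ∧
      ((lr.1.eval I α = lr.2.eval I α ∧ p.2 = embL (labT I lf α lr.2)) ∨
       (lr.1.eval I α ≠ lr.2.eval I α ∧
         p.2 = nabla (lr.1.eval I α) (lr.2.eval I α) (embL (labT I lf α lr.2)))) }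

/-- The relabeling rules of the dynamic labeling `DL(A,λ,R)`. -/
def DLprp (I : (f : F) → (Fin (ar f) → A) → A)
    (lf : ∀ f : F, (Fin (ar f) → A) → L f)
    (R : Set (Rule F ar ℕ)) (Sred : Set (LSym F L)) :
    Set (Rule (DSym F L A) (dar ar) ℕ) :=
  { p | ∃ (f : F) (as : Fin (ar f) → A) (i : Fin (ar f)) (b b' : A),
      VC I lf R Sred b b' ∧ as i = b ∧
      (⟨f, lf f as⟩ : LSym F L) ∉ Sred ∧
      p.1 = Tm.app (Sum.inl (⟨f, lf f as⟩ : LSym F L))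
              (fun j => if j = i then nabla b b' (Tm.var (j : ℕ)) else Tm.var (j : ℕ)) ∧
      ((I f as = I f (Function.update as i b') ∧
         p.2 = Tm.app (Sum.inl (⟨f, lf f (Function.update as i b')⟩ : LSym F L))
                 (fun j => Tm.var (j : ℕ))) ∨
       (I f as ≠ I f (Function.update as i b') ∧
         p.2 = nabla (I f as) (I f (Function.update as i b'))
                 (Tm.app (Sum.inl (⟨f, lf f (Function.update as i b')⟩ : LSym F L))
                    (fun j => Tm.var (j : ℕ))))) }

/-- The replacement map of the dynamic labeling: all arguments of `∇`-symbols
    and of redex symbols are frozen. -/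
def dlMu (Sred : Set (LSym F L)) : (g : DSym F L A) → Fin (dar ar g) → Prop :=
  fun g _ => match g with
    | Sum.inl h => h ∉ Sred
    | Sum.inr _ => False

/-- `n`-fold composition of a relation. -/
def itN {τ : Type _} (r : τ → τ → Prop) : ℕ → τ → τ → Prop
  | 0 => fun a b => a = b
  | n + 1 => fun a c => ∃ b, r a b ∧ itN r n b c

end TRSStmt

/-!
An outermost step `s → t` contracts a redex `lσ` inside a context `C`. No redex lies above it,
so by soundness of the labeling no symbol on the spine of `C` is labeled in `Σ_red`, and every
argument position along the spine is μ-replacing in `lab(top(s))`. The labeled original rule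
rewrites `lab(lσ)` to `∇_{[lσ],[rσ]}(lab(rσ))` (to `lab(rσ)` if the two values agree), and each
relabeling step moves the `∇` one node up and relabels that node, until the value of the
subterm below it stops changing; from then on all labels above agree with those of `t`. By the
C-model property the values agree `cd_A(R)` nodes above the redex, and at the root since `top`
is interpreted as a constant, so at most `cd_A(R)` relabeling steps are needed and the last one
produces exactly `lab(top(t))`. Outermost ground termination follows because every outermost
step becomes a nonempty sequence of `DL(A,λ,R)`-steps.
-/

namespace TRSStmt

variable {F : Type} {ar : F → ℕ} {V W U A : Type} {L : F → Type}

section Terms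

theorem Tm.eval_subst (I : (f : F) → (Fin (ar f) → A) → A) (α : W → A) (σ : V → Tm F ar W) :
    ∀ t : Tm F ar V, (t.subst σ).eval I α = t.eval I (fun x => (σ x).eval I α)
  | .var _ => rfl
  | .app f ts => by
      simp only [Tm.subst, Tm.eval]
      congr 1; funext i; exact Tm.eval_subst I α σ (ts i)

theorem Tm.subst_subst (σ : V → Tm F ar W) (τ : W → Tm F ar U) :
    ∀ t : Tm F ar V, (t.subst σ).subst τ = t.subst (fun x => (σ x).subst τ)
  | .var _ => rfl
  | .app f ts => by
      simp only [Tm.subst]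
      congr 1; funext i; exact Tm.subst_subst σ τ (ts i)

theorem labT_subst (I : (f : F) → (Fin (ar f) → A) → A)
    (lf : ∀ f : F, (Fin (ar f) → A) → L f) (α : W → A) (σ : V → Tm F ar W) :
    ∀ t : Tm F ar V, labT I lf α (t.subst σ)
      = (labT I lf (fun x => (σ x).eval I α) t).subst (fun x => labT I lf α (σ x))
  | .var _ => rfl
  | .app f ts => by
      simp only [Tm.subst, labT]
      congr 1
      · simp only [Tm.eval_subst]
      · funext i; exact labT_subst I lf α σ (ts i)

theorem embL_subst (σ : V → Tm (LSym F L) (lar ar) W) :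
    ∀ t : Tm (LSym F L) (lar ar) V,
      embL (A := A) (t.subst σ) = (embL t).subst (fun x => embL (σ x))
  | .var _ => rfl
  | .app g ts => by
      simp only [Tm.subst, embL]
      congr 1; funext i; exact embL_subst σ (ts i)

@[simp] theorem Tm.subAt_nil (t : Tm F ar V) : t.subAt [] = some t := by cases t <;> rfl

@[simp] theorem Tm.replaceAt_nil (t s : Tm F ar V) : t.replaceAt [] s = some s := by
  cases t <;> rfl

@[simp] theorem Tm.subAt_app_cons (f : F) (ts : Fin (ar f) → Tm F ar V) (i : Fin (ar f))
    (p : List ℕ) : (Tm.app f ts).subAt (i.val :: p) = (ts i).subAt p := by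
  simp [Tm.subAt]

@[simp] theorem Tm.replaceAt_app_cons (f : F) (ts : Fin (ar f) → Tm F ar V) (i : Fin (ar f))
    (p : List ℕ) (s : Tm F ar V) :
    (Tm.app f ts).replaceAt (i.val :: p) s
      = ((ts i).replaceAt p s).map (fun u => .app f (Function.update ts i u)) := by
  simp [Tm.replaceAt]

theorem Tm.subAt_subst (σ : V → Tm F ar W) :
    ∀ (p : List ℕ) (t u : Tm F ar V),
      t.subAt p = some u → (t.subst σ).subAt p = some (u.subst σ)
  | [], t, u, h => by simp_all
  | _ :: _, .var _, _, h => by simp [Tm.subAt] at h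
  | i :: p, .app f ts, u, h => by
      simp only [Tm.subAt, Tm.subst] at h ⊢
      split at h
      · rename_i hi; rw [dif_pos hi]; exact Tm.subAt_subst σ p _ u h
      · cases h

theorem Tm.replaceAt_subst (σ : V → Tm F ar W) :
    ∀ (p : List ℕ) (t w u : Tm F ar V),
      t.replaceAt p w = some u → (t.subst σ).replaceAt p (w.subst σ) = some (u.subst σ)
  | [], t, w, u, h => by simp_all
  | _ :: _, .var _, _, _, h => by simp [Tm.replaceAt] at h
  | i :: p, .app f ts, w, u, h => by
      simp only [Tm.replaceAt, Tm.subst] at h ⊢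
      split at h
      · rename_i hi
        obtain ⟨v, hv, rfl⟩ := Option.map_eq_some_iff.1 h
        rw [dif_pos hi, Tm.replaceAt_subst σ p _ w v hv]
        simp only [Option.map_some, Tm.subst, Option.some.injEq, Tm.app.injEq, heq_eq_eq,
          true_and]
        funext j
        by_cases hj : j = ⟨i, hi⟩
        · subst hj; simp
        · simp [Function.update_of_ne hj]
      · cases h

end Terms

section Contexts

theorem comp_dite_eq_update {B : Type} {n : ℕ} (φ : Tm F ar V → B) (i : Fin n)
    (ts : ∀ j, j ≠ i → Tm F ar V) (x x' : Tm F ar V) :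
    (fun j => φ (if h : j = i then x' else ts j h))
      = Function.update (fun j => φ (if h : j = i then x else ts j h)) i (φ x') := by
  funext j; by_cases hj : j = i <;> simp [hj]

namespace Ctx

def SpineAll (P : Tm F ar V → Prop) : Ctx F ar V → Tm F ar V → Prop
  | .hole, _ => True
  | .app f i ts C, w => P ((Ctx.app f i ts C).fill w) ∧ C.SpineAll P w

def subst (σ : V → Tm F ar W) : Ctx F ar V → Ctx F ar W
  | .hole => .hole
  | .app f i ts C => .app f i (fun j h => (ts j h).subst σ) (C.subst σ)

@[simp] theorem depth_subst (σ : V → Tm F ar W) :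
    ∀ C : Ctx F ar V, (C.subst σ).depth = C.depth
  | .hole => rfl
  | .app _ _ _ C => congrArg (· + 1) (depth_subst σ C)

theorem fill_app_update (f : F) (i : Fin (ar f)) (ts : Fin (ar f) → Tm F ar V)
    (C : Ctx F ar V) (w : Tm F ar V) :
    (Ctx.app f i (fun j _ => ts j) C).fill w = .app f (Function.update ts i (C.fill w)) := by
  simp only [fill]
  congr 1; funext j
  by_cases hj : j = i <;> simp [hj]

theorem exists_of_subAt_of_replaceAt (P : Tm F ar V → Prop) :
    ∀ (p : List ℕ) (s w w' t : Tm F ar V), s.subAt p = some w → s.replaceAt p w' = some t →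
      (∀ q, q <+: p → q ≠ p → ∀ u, s.subAt q = some u → P u) →
      ∃ C : Ctx F ar V, C.fill w = s ∧ C.fill w' = t ∧ C.SpineAll P w
  | [], s, w, w', t, hw, ht, _ => by
      simp only [Tm.subAt_nil, Tm.replaceAt_nil, Option.some.injEq] at hw ht
      exact ⟨.hole, hw.symm, ht, trivial⟩
  | _ :: _, .var _, _, _, _, hw, _, _ => by simp [Tm.subAt] at hw
  | i :: p, .app f ts, w, w', t, hw, ht, hP => by
      have hi : i < ar f := by
        by_contra hi; simp [Tm.subAt, hi] at hw
      let k : Fin (ar f) := ⟨i, hi⟩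
      rw [show i = k.val from rfl, Tm.subAt_app_cons] at hw
      rw [show i = k.val from rfl, Tm.replaceAt_app_cons] at ht
      obtain ⟨tk, htk, rfl⟩ := Option.map_eq_some_iff.1 ht
      have hPk : ∀ q, q <+: p → q ≠ p → ∀ u, (ts k).subAt q = some u → P u :=
        fun q ⟨r, hr⟩ hq u hu => hP (i :: q) ⟨r, by rw [← hr]; rfl⟩ (by simpa using hq) u
          (by rw [show i = k.val from rfl, Tm.subAt_app_cons]; exact hu)
      obtain ⟨C, hfw, hfw', hC⟩ := exists_of_subAt_of_replaceAt P p _ w w' tk hw htk hPk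
      have hfill : (Ctx.app f k (fun j _ => ts j) C).fill w = .app f ts := by
        rw [fill_app_update, hfw, Function.update_eq_self]
      refine ⟨.app f k (fun j _ => ts j) C, hfill,
        by rw [fill_app_update, hfw'], ?_, hC⟩
      rw [hfill]
      exact hP [] ⟨i :: p, rfl⟩ (by simp) _ rfl

theorem eval_fill_congr (I : (f : F) → (Fin (ar f) → A) → A) (α : V → A) {w w' : Tm F ar V}
    (h : w.eval I α = w'.eval I α) :
    ∀ C : Ctx F ar V, (C.fill w).eval I α = (C.fill w').eval I α
  | .hole => h
  | .app f i ts C => by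
      simp only [fill, Tm.eval]
      congr 1; funext j
      split_ifs
      · exact eval_fill_congr I α h C
      · rfl

theorem eval_fill_subst_ground (I : (f : F) → (Fin (ar f) → A) → A) (α : Empty → A)
    (l : Tm F ar V) (σ : V → Tm F ar Empty) :
    ∀ C : Ctx F ar Empty,
      (C.fill (l.subst σ)).eval I α
        = ((C.subst Empty.elim).fill l).eval I (fun x => (σ x).eval I α)
  | .hole => Tm.eval_subst I α σ l
  | .app f i ts C => by
      simp only [fill, subst, Tm.eval]
      congr 1; funext j
      split_ifs
      · exact eval_fill_subst_ground I α l σ C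
      · rw [Tm.eval_subst]; congr 1; funext x; exact x.elim

end Ctx

theorem HoldsAtDepth.succ {I : (f : F) → (Fin (ar f) → A) → A} {n : ℕ} {lr : Rule F ar V}
    (h : HoldsAtDepth I n lr) : HoldsAtDepth I (n + 1) lr := by
  rintro (_ | ⟨f, i, ts, C⟩) α hC
  · cases hC
  · exact Ctx.eval_fill_congr I α (h C α (Nat.succ_injective hC)) (.app f i ts .hole)

theorem HoldsAtDepth.mono {I : (f : F) → (Fin (ar f) → A) → A} {n k : ℕ} {lr : Rule F ar V}
    (h : HoldsAtDepth I n lr) (hnk : n ≤ k) : HoldsAtDepth I k lr := by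
  induction k, hnk using Nat.le_induction with
  | base => exact h
  | succ _ _ ih => exact ih.succ

theorem HoldsAtDepth.subst_ground {I : (f : F) → (Fin (ar f) → A) → A} {n : ℕ}
    {lr : Rule F ar V} (h : HoldsAtDepth I n lr) (σ : V → Tm F ar Empty) :
    HoldsAtDepth I n (lr.1.subst σ, lr.2.subst σ) := by
  intro C α hC
  simp only [Ctx.eval_fill_subst_ground]
  exact h _ _ (by simpa using hC)

end Contexts

section Iterate

variable {τ τ' : Type*} {r : τ → τ → Prop}

theorem itN_snoc : ∀ {m : ℕ} {a b c : τ}, itN r m a b → r b c → itN r (m + 1) a c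
  | 0, _, _, _, rfl, hbc => ⟨_, hbc, rfl⟩
  | _ + 1, _, _, _, ⟨d, had, hdb⟩, hbc => ⟨d, had, itN_snoc hdb hbc⟩

theorem itN_map {r' : τ' → τ' → Prop} (φ : τ → τ') (hφ : ∀ a b, r a b → r' (φ a) (φ b)) :
    ∀ {m : ℕ} {a b : τ}, itN r m a b → itN r' m (φ a) (φ b)
  | 0, _, _, rfl => rfl
  | _ + 1, _, _, ⟨c, hac, hcb⟩ => ⟨φ c, hφ _ _ hac, itN_map φ hφ hcb⟩

theorem itN.reflTransGen : ∀ {m : ℕ} {a b : τ}, itN r m a b → Relation.ReflTransGen r a b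
  | 0, _, _, rfl => .refl
  | _ + 1, _, _, ⟨_, hac, hcb⟩ => .head hac (itN.reflTransGen hcb)

theorem NoInf.transGen (h : NoInf r) : NoInf (Relation.TransGen r) := by
  have hwf : WellFounded (Function.swap r) :=
    wellFounded_iff_isEmpty_descending_chain.2 ⟨fun ⟨g, hg⟩ => h ⟨g, hg⟩⟩
  rintro ⟨g, hg⟩
  exact (wellFounded_iff_isEmpty_descending_chain.1 hwf.transGen).false
    ⟨g, fun n => Relation.transGen_swap.2 (hg n)⟩

theorem NoInf.of_map {r' : τ' → τ' → Prop} (φ : τ → τ')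
    (hφ : ∀ a b, r a b → Relation.TransGen r' (φ a) (φ b)) (h : NoInf r') : NoInf r :=
  fun ⟨g, hg⟩ => h.transGen ⟨φ ∘ g, fun n => hφ _ _ (hg n)⟩

end Iterate

section MuStep

variable {R R' : Set (Rule F ar V)} {μ : (f : F) → Fin (ar f) → Prop}

theorem MuStep.mono (hRR' : R ⊆ R') {a b : Tm F ar W} (h : MuStep R μ a b) :
    MuStep R' μ a b :=
  let ⟨p, ⟨lr, hlr, σ, h1, h2⟩, hμ⟩ := h
  ⟨p, ⟨lr, hRR' hlr, σ, h1, h2⟩, hμ⟩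

theorem MuPos.subst (τ : W → Tm F ar U) {t : Tm F ar W} {p : List ℕ} (h : MuPos μ t p) :
    MuPos μ (t.subst τ) p := by
  induction h with
  | nil => exact .nil _
  | cons f ts i p hμ _ ih => exact .cons f (fun j => (ts j).subst τ) i p hμ ih

theorem MuStep.subst (τ : W → Tm F ar U) {a b : Tm F ar W} (h : MuStep R μ a b) :
    MuStep R μ (a.subst τ) (b.subst τ) := by
  obtain ⟨p, ⟨lr, hlr, σ, h1, h2⟩, hμ⟩ := h
  refine ⟨p, ⟨lr, hlr, fun x => (σ x).subst τ, ?_, ?_⟩, hμ.subst τ⟩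
  · rw [← Tm.subst_subst]; exact Tm.subAt_subst τ p a _ h1
  · rw [← Tm.subst_subst]; exact Tm.replaceAt_subst τ p a _ b h2

def Ctx.MuReplacing (μ : (f : F) → Fin (ar f) → Prop) : Ctx F ar V → Prop
  | .hole => True
  | .app f i _ C => μ f i ∧ C.MuReplacing μ

theorem MuStep.fill {a b : Tm F ar W} (h : MuStep R μ a b) :
    ∀ D : Ctx F ar W, D.MuReplacing μ → MuStep R μ (D.fill a) (D.fill b)
  | .hole, _ => h
  | .app g i ts D, ⟨hμi, hD⟩ => by
      obtain ⟨p, ⟨lr, hlr, σ, h1, h2⟩, hμ⟩ := MuStep.fill h D hD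
      refine ⟨i.val :: p, ⟨lr, hlr, σ, ?_, ?_⟩, .cons g _ i p hμi (by rwa [dif_pos rfl])⟩
      · rw [Ctx.fill, Tm.subAt_app_cons, dif_pos rfl]; exact h1
      · rw [Ctx.fill, Tm.replaceAt_app_cons, dif_pos rfl, h2, Option.map_some, Ctx.fill]
        congr 2; funext j
        by_cases hj : j = i <;> simp [hj]

theorem itN_muStep_fill (D : Ctx F ar W) (hD : D.MuReplacing μ) {m : ℕ} {a b : Tm F ar W}
    (h : itN (MuStep R μ) m a b) : itN (MuStep R μ) m (D.fill a) (D.fill b) :=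
  itN_map D.fill (fun _ _ hab => hab.fill D hD) h

end MuStep

section DynamicLabeling

variable (I : (f : F) → (Fin (ar f) → A) → A) (lf : ∀ f : F, (Fin (ar f) → A) → L f)

def LabRootNotRed (Sred : Set (LSym F L)) (α : V → A) (u : Tm F ar V) : Prop :=
  ∀ g ∈ Sred, (labT I lf α u).rootSym ≠ some g

open Classical in
noncomputable def nablaIfNe (a a' : A) (t : Tm (DSym F L A) (dar ar) W) :
    Tm (DSym F L A) (dar ar) W :=
  if a = a' then t else nabla a a' t

theorem nablaIfNe_of_eq {a a' : A} (h : a = a') (t : Tm (DSym F L A) (dar ar) W) :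
    nablaIfNe a a' t = t := if_pos h

theorem nablaIfNe_of_ne {a a' : A} (h : a ≠ a') (t : Tm (DSym F L A) (dar ar) W) :
    nablaIfNe a a' t = nabla a a' t := if_neg h

theorem nablaIfNe_subst (a a' : A) (t : Tm (DSym F L A) (dar ar) V)
    (σ : V → Tm (DSym F L A) (dar ar) W) :
    (nablaIfNe a a' t).subst σ = nablaIfNe a a' (t.subst σ) := by
  unfold nablaIfNe; split_ifs <;> rfl

/-- The context `C`, labeled as in `C.fill w` and embedded into the dynamic-labeling signature. -/
def Ctx.dlab (α : V → A) : Ctx F ar V → Tm F ar V → Ctx (DSym F L A) (dar ar) V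
  | .hole, _ => .hole
  | .app f i ts C, w =>
      .app (Sum.inl ⟨f, lf f (fun j => (if h : j = i then C.fill w else ts j h).eval I α)⟩) i
        (fun j h => embL (labT I lf α (ts j h))) (C.dlab α w)

open Classical in
/-- The number of relabeling steps that move a `∇` from the hole of `C` upward. -/
noncomputable def Ctx.valueChanges (α : V → A) : Ctx F ar V → Tm F ar V → Tm F ar V → ℕ
  | .hole, _, _ => 0
  | .app _ _ _ C, w, w' =>
      C.valueChanges α w w' + if (C.fill w).eval I α = (C.fill w').eval I α then 0 else 1

variable {I lf} {R : Set (Rule F ar ℕ)} {Sred : Set (LSym F L)}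

theorem Ctx.dlab_fill_embL (α : V → A) (w : Tm F ar V) :
    ∀ C : Ctx F ar V,
      (C.dlab I lf α w).fill (embL (labT I lf α w)) = embL (labT I lf α (C.fill w))
  | .hole => rfl
  | .app f i ts C => by
      simp only [dlab, fill, labT, embL]
      congr 1; funext (j : Fin (ar f))
      rcases eq_or_ne j i with rfl | hj
      · split
        · simpa using Ctx.dlab_fill_embL α w C
        · contradiction
      · split
        · contradiction
        · rfl

theorem Ctx.dlab_congr {α : V → A} {w w' : Tm F ar V} (h : w.eval I α = w'.eval I α) :
    ∀ C : Ctx F ar V, C.dlab I lf α w = C.dlab I lf α w'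
  | .hole => rfl
  | .app f i ts C => by
      have hC : (fun j => (if h : j = i then C.fill w else ts j h).eval I α)
          = (fun j => (if h : j = i then C.fill w' else ts j h).eval I α) := by
        funext j
        split_ifs
        exacts [eval_fill_congr I α h C, rfl]
      rw [dlab, dlab, hC, Ctx.dlab_congr h C]

theorem Ctx.muReplacing_dlab {α : V → A} {w : Tm F ar V} :
    ∀ C : Ctx F ar V, C.SpineAll (LabRootNotRed I lf Sred α) w →
      (C.dlab I lf α w).MuReplacing (dlMu Sred)
  | .hole, _ => trivial
  | .app _ _ _ C, ⟨hroot, hC⟩ => ⟨fun hmem => hroot _ hmem rfl, C.muReplacing_dlab hC⟩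

theorem VCpre.fill {α : V → A} {w w' : Tm F ar V}
    (h : VCpre I lf R Sred (w.eval I α) (w'.eval I α)) :
    ∀ C : Ctx F ar V, C.SpineAll (LabRootNotRed I lf Sred α) w →
      VCpre I lf R Sred ((C.fill w).eval I α) ((C.fill w').eval I α)
  | .hole, _ => h
  | .app f i ts C, ⟨hroot, hC⟩ => by
      have := VCpre.step _ _ (VCpre.fill h C hC) f _ i (by simp)
        (fun hmem => hroot _ hmem rfl)
      rwa [← comp_dite_eq_update] at this

theorem muStep_dlOrg_root (α : W → A) {lr : Rule F ar ℕ} (hlr : lr ∈ R)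
    (σ : ℕ → Tm F ar W) :
    MuStep (DLorg I lf R) (dlMu Sred) (embL (labT I lf α (lr.1.subst σ)))
      (nablaIfNe ((lr.1.subst σ).eval I α) ((lr.2.subst σ).eval I α)
        (embL (labT I lf α (lr.2.subst σ)))) := by
  set β : ℕ → A := fun x => (σ x).eval I α
  have hmem : (embL (labT I lf β lr.1), nablaIfNe (lr.1.eval I β) (lr.2.eval I β)
      (embL (labT I lf β lr.2))) ∈ DLorg I lf R := by
    refine ⟨lr, hlr, β, rfl, ?_⟩
    by_cases h : lr.1.eval I β = lr.2.eval I β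
    · exact .inl ⟨h, nablaIfNe_of_eq h _⟩
    · exact .inr ⟨h, nablaIfNe_of_ne h _⟩
  refine ⟨[], ⟨_, hmem, fun x => embL (labT I lf α (σ x)), ?_, ?_⟩, .nil _⟩
  · rw [Tm.subAt_nil, labT_subst, embL_subst]
  · rw [Tm.replaceAt_nil, nablaIfNe_subst, ← embL_subst, ← labT_subst, Tm.eval_subst,
      Tm.eval_subst]

theorem muStep_dlPrp_node (α : V → A) (f : F) (i : Fin (ar f)) (ts : ∀ j, j ≠ i → Tm F ar V)
    (u u' : Tm F ar V) (hroot : LabRootNotRed I lf Sred α ((Ctx.app f i ts .hole).fill u))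
    (hvc : VC I lf R Sred (u.eval I α) (u'.eval I α)) :
    MuStep (DLprp I lf R Sred) (dlMu Sred)
      (((Ctx.app f i ts .hole).dlab I lf α u).fill
        (nabla (u.eval I α) (u'.eval I α) (embL (labT I lf α u'))))
      (nablaIfNe (((Ctx.app f i ts .hole).fill u).eval I α)
        (((Ctx.app f i ts .hole).fill u').eval I α)
        (embL (labT I lf α ((Ctx.app f i ts .hole).fill u')))) := by
  set args' : Fin (ar f) → Tm F ar V := fun j => if h : j = i then u' else ts j h
  set as : Fin (ar f) → A := fun j => (if h : j = i then u else ts j h).eval I α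
  set as' := Function.update as i (u'.eval I α)
  have has' : (fun j => (args' j).eval I α) = as' := comp_dite_eq_update _ i ts u u'
  let σ : ℕ → Tm (DSym F L A) (dar ar) V := fun n =>
    if h : n < ar f then embL (labT I lf α (args' ⟨n, h⟩)) else embL (labT I lf α u')
  have hσ : ∀ j : Fin (ar f), σ j = embL (labT I lf α (args' j)) := fun j => dif_pos j.isLt
  refine ⟨[], ⟨(_, nablaIfNe (I f as) (I f as') (.app (Sum.inl ⟨f, lf f as'⟩) (.var ·))),
    ⟨f, as, i, _, _, hvc, by simp [as], fun hmem => hroot _ hmem rfl, rfl, ?_⟩, σ, ?_, ?_⟩,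
    .nil _⟩
  · by_cases h : I f as = I f as'
    · exact .inl ⟨h, nablaIfNe_of_eq h _⟩
    · exact .inr ⟨h, nablaIfNe_of_ne h _⟩
  · rw [Tm.subAt_nil]
    congr 1
    show Tm.app _ _ = Tm.app _ _
    congr 1; funext (j : Fin (ar f))
    by_cases hj : j = i
    · subst hj; simp [Tm.subst, nabla, hσ, args', Ctx.dlab, Ctx.fill]
    · simp [hj, Tm.subst, hσ, args']
  · have hval : ((Ctx.app f i ts .hole).fill u').eval I α = I f as' := by rw [← has']; rfl
    have hlab : embL (A := A) (labT I lf α ((Ctx.app f i ts .hole).fill u'))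
        = .app (Sum.inl ⟨f, lf f as'⟩) (fun j => embL (labT I lf α (args' j))) := by
      rw [← has']; rfl
    rw [Tm.replaceAt_nil, nablaIfNe_subst, hval, hlab]
    congr 2
    show Tm.app _ (fun j => σ j) = _
    congr 1; funext (j : Fin (ar f))
    exact hσ j

theorem itN_dlPrp_fill (α : V → A) {w w' : Tm F ar V}
    (hvc : w.eval I α ≠ w'.eval I α → VCpre I lf R Sred (w.eval I α) (w'.eval I α)) :
    ∀ C : Ctx F ar V, C.SpineAll (LabRootNotRed I lf Sred α) w →
      itN (MuStep (DLprp I lf R Sred) (dlMu Sred)) (C.valueChanges I α w w')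
        ((C.dlab I lf α w).fill (nablaIfNe (w.eval I α) (w'.eval I α) (embL (labT I lf α w'))))
        (nablaIfNe ((C.fill w).eval I α) ((C.fill w').eval I α) (embL (labT I lf α (C.fill w'))))
  | .hole, _ => rfl
  | .app f i ts C, ⟨hroot, hC⟩ => by
      let node : Ctx F ar V := .app f i ts .hole
      have hnode : (node.dlab I lf α (C.fill w)).MuReplacing (dlMu Sred) :=
        ⟨fun hmem => hroot _ hmem rfl, trivial⟩
      have hlift := itN_muStep_fill _ hnode (itN_dlPrp_fill α hvc C hC)
      show itN _ (_ + _) ((node.dlab I lf α (C.fill w)).fill _)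
        (nablaIfNe ((node.fill (C.fill w)).eval I α) ((node.fill (C.fill w')).eval I α)
          (embL (labT I lf α (node.fill (C.fill w')))))
      by_cases heq : (C.fill w).eval I α = (C.fill w').eval I α
      · rw [if_pos heq, add_zero, nablaIfNe_of_eq (Ctx.eval_fill_congr I α heq node)]
        rw [← Ctx.dlab_fill_embL, ← Ctx.dlab_congr heq]
        rwa [nablaIfNe_of_eq heq] at hlift
      · rw [if_neg heq]
        rw [nablaIfNe_of_ne heq] at hlift
        have hvcC := (hvc fun h => heq (Ctx.eval_fill_congr I α h C)).fill C hC
        exact itN_snoc hlift (muStep_dlPrp_node α f i ts _ _ hroot ⟨hvcC, heq⟩)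

theorem Ctx.valueChanges_le_depth (α : V → A) (w w' : Tm F ar V) :
    ∀ C : Ctx F ar V, C.valueChanges I α w w' ≤ C.depth
  | .hole => le_rfl
  | .app _ _ _ C => by
      simp only [valueChanges, depth]
      have := C.valueChanges_le_depth α w w'
      split_ifs <;> omega

/-- Values agree above depth `n`, so at most the `n` innermost nodes see a value change. -/
theorem Ctx.valueChanges_le_of_holdsAtDepth (α : V → A) {w w' : Tm F ar V} {n : ℕ}
    (h : HoldsAtDepth I n (w, w')) : ∀ C : Ctx F ar V, C.valueChanges I α w w' ≤ n
  | .hole => Nat.zero_le n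
  | .app _ _ _ C => by
      simp only [valueChanges]
      split_ifs with heq
      · simpa using C.valueChanges_le_of_holdsAtDepth α h
      · have hlt : C.depth < n := by
          by_contra! hle
          exact heq ((h.mono hle) C α rfl)
        have := C.valueChanges_le_depth (I := I) α w w'
        omega

variable {tp : F}

theorem tpFree_of_subAt :
    ∀ {q : List ℕ} {s u : Tm F ar V}, tpFree tp s → s.subAt q = some u → tpFree tp u
  | [], _, _, hs, h => by simp_all
  | _ :: _, .var _, _, _, h => by simp [Tm.subAt] at h
  | i :: q, .app f ts, u, hs, h => by
      simp only [Tm.subAt] at h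
      split at h
      · exact tpFree_of_subAt (hs.2 _) h
      · cases h

theorem OStep.exists_ctx (hsound : SoundLab I lf tp R Sred) {s t : Tm F ar Empty}
    (hs : tpFree tp s) (hst : OStep R s t) :
    ∃ lr ∈ R, ∃ (σ : ℕ → Tm F ar Empty) (C : Ctx F ar Empty),
      C.fill (lr.1.subst σ) = s ∧ C.fill (lr.2.subst σ) = t ∧
        C.SpineAll (LabRootNotRed I lf Sred (fun x => x.elim)) (lr.1.subst σ) := by
  obtain ⟨p, ⟨lr, hlr, σ, hsub, hrep⟩, hout⟩ := hst
  obtain ⟨C, hCs, hCt, hC⟩ := Ctx.exists_of_subAt_of_replaceAt _ p s _ _ t hsub hrep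
    fun q hq hne u hu g hg hroot =>
      hout q hq hne u hu (hsound u (tpFree_of_subAt hs hu) g hg hroot)
  exact ⟨lr, hlr, σ, C, hCs, hCt, hC⟩

def Ctx.top (tp : F) (htp : ar tp = 1) (C : Ctx F ar V) : Ctx F ar V :=
  .app tp ⟨0, by omega⟩ (fun j hj => absurd (Fin.ext (by have := j.isLt; omega)) hj) C

theorem Ctx.fill_top (htp : ar tp = 1) (C : Ctx F ar V) (w : Tm F ar V) :
    (C.top tp htp).fill w = topT tp (C.fill w) := by
  simp only [top, fill, topT]
  congr 1; funext j
  rw [dif_pos (Fin.ext (by have := j.isLt; omega))]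

theorem dl_simulates_oStep (htp : ar tp = 1)
    (htpconst : ∀ as as' : Fin (ar tp) → A, I tp as = I tp as')
    (hSred : ∀ g ∈ Sred, g.1 ≠ tp) (hsound : SoundLab I lf tp R Sred)
    {N : ℕ} (hN : ∀ lr ∈ R, HoldsAtDepth I N lr)
    {s t : Tm F ar Empty} (hs : tpFree tp s) (hst : OStep R s t) :
    ∃ m ≤ N, ∃ u : Tm (DSym F L A) (dar ar) Empty,
      MuStep (DLorg I lf R) (dlMu Sred) (embL (glab I lf (topT tp s))) u ∧
      itN (MuStep (DLprp I lf R Sred) (dlMu Sred)) m u (embL (glab I lf (topT tp t))) := by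
  obtain ⟨lr, hlr, σ, C, rfl, rfl, hC⟩ := OStep.exists_ctx hsound hs hst
  set α : Empty → A := fun x => x.elim
  have hC' : (C.top tp htp).SpineAll (LabRootNotRed I lf Sred α) (lr.1.subst σ) :=
    ⟨fun g hg h => hSred g hg (congrArg Sigma.fst (Option.some.inj h)).symm, hC⟩
  have hvc : (lr.1.subst σ).eval I α ≠ (lr.2.subst σ).eval I α →
      VCpre I lf R Sred ((lr.1.subst σ).eval I α) ((lr.2.subst σ).eval I α) := by
    simp only [Tm.eval_subst]
    exact VCpre.base lr hlr _
  have htop : ((C.top tp htp).fill (lr.1.subst σ)).eval I α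
      = ((C.top tp htp).fill (lr.2.subst σ)).eval I α := by
    simp only [Ctx.fill_top, topT, Tm.eval]
    exact htpconst _ _
  have hsteps := itN_dlPrp_fill α hvc _ hC'
  rw [nablaIfNe_of_eq htop, Ctx.fill_top] at hsteps
  refine ⟨_, (C.top tp htp).valueChanges_le_of_holdsAtDepth α ((hN lr hlr).subst_ground σ),
    _, ?_, hsteps⟩
  rw [← Ctx.fill_top htp, glab, ← Ctx.dlab_fill_embL]
  exact (muStep_dlOrg_root α hlr σ).fill _ ((C.top tp htp).muReplacing_dlab hC')

theorem OGTtp.of_dl_simulation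
    (hsim : ∀ s t : Tm F ar Empty, tpFree tp s → OStep R s t →
      ∃ m, ∃ u : Tm (DSym F L A) (dar ar) Empty,
        MuStep (DLorg I lf R) (dlMu Sred) (embL (glab I lf (topT tp s))) u ∧
        itN (MuStep (DLprp I lf R Sred) (dlMu Sred)) m u (embL (glab I lf (topT tp t))))
    (hterm : NoInf (MuStep (DLorg I lf R ∪ DLprp I lf R Sred) (dlMu Sred) :
        Tm (DSym F L A) (dar ar) ℕ → Tm (DSym F L A) (dar ar) ℕ → Prop)) :
    OGTtp R tp := by
  let φ (s : Tm F ar Empty) : Tm (DSym F L A) (dar ar) ℕ :=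
    (embL (glab I lf (topT tp s))).subst (fun x => x.elim)
  rintro ⟨g, hfree, hstep⟩
  refine NoInf.of_map (r := fun s t => tpFree tp s ∧ OStep R s t) φ ?_ hterm
    ⟨g, fun n => ⟨hfree n, hstep n⟩⟩
  rintro s t ⟨hs, hst⟩
  obtain ⟨m, u, horg, hprp⟩ := hsim s t hs hst
  exact .head' ((horg.mono Set.subset_union_left).subst _)
    (itN_map _ (fun _ _ h => (h.mono Set.subset_union_right).subst _) hprp).reflTransGen

end DynamicLabeling

end TRSStmt

namespace Stmt

open TRSStmt

theorem dl_sound_general {F : Type} {ar : F → ℕ} {A : Type} {L : F → Type}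
    (I : (f : F) → (Fin (ar f) → A) → A)
    (lf : ∀ f : F, (Fin (ar f) → A) → L f)
    (tp : F) (htp : ar tp = 1)
    (htpconst : ∀ as as' : Fin (ar tp) → A, I tp as = I tp as')
    (R : Set (Rule F ar ℕ))
    (Sred : Set (LSym F L)) (hSred : ∀ g ∈ Sred, g.1 ≠ tp)
    (hsound : SoundLab I lf tp R Sred)
    (N : ℕ) (hN : ∀ lr ∈ R, HoldsAtDepth I N lr) :
    (∀ s t : Tm F ar Empty, tpFree tp s → tpFree tp t → OStep R s t →
      ∃ m ≤ N, ∃ u : Tm (DSym F L A) (dar ar) Empty,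
        MuStep (DLorg I lf R) (dlMu Sred) (embL (glab I lf (topT tp s))) u ∧
        itN (MuStep (DLprp I lf R Sred) (dlMu Sred)) m u
          (embL (glab I lf (topT tp t)))) ∧
    (NoInf (MuStep (DLorg I lf R ∪ DLprp I lf R Sred) (dlMu Sred) :
        Tm (DSym F L A) (dar ar) ℕ → Tm (DSym F L A) (dar ar) ℕ → Prop) →
      OGTtp R tp) := by
  have hsim {s t : Tm F ar Empty} (hs : tpFree tp s) (hst : OStep R s t) :=
    dl_simulates_oStep (lf := lf) htp htpconst hSred hsound hN hs hst
  refine ⟨fun s t hs _ hst => hsim hs hst, OGTtp.of_dl_simulation fun s t hs hst => ?_⟩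
  obtain ⟨m, -, hm⟩ := hsim hs hst
  exact ⟨m, hm⟩

/-- Lemma 6.10 and Theorem 6.11: with a sound C-labeling, every outermost
    ground step of `R` is simulated in the dynamic labeling `DL(A,λ,R)` by one μ-step
    with a labeled original rule followed by at most `cd_A(R)` relabeling μ-steps;
    consequently, termination of `DL(A,λ,R)` implies outermost ground termination of `R`. -/
theorem dl_sound {F : Type} {ar : F → ℕ} {A : Type} {L : F → Type}
    (I : (f : F) → (Fin (ar f) → A) → A)
    (lf : ∀ f : F, (Fin (ar f) → A) → L f)
    (tp : F) (htp : ar tp = 1)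
    (htpconst : ∀ as as' : Fin (ar tp) → A, I tp as = I tp as')
    (R : Set (Rule F ar ℕ)) (hTRS : IsTRS R) (hfin : R.Finite)
    (hRtp : ∀ lr ∈ R, tpFree tp lr.1 ∧ tpFree tp lr.2)
    (Sred : Set (LSym F L)) (hSred : ∀ g ∈ Sred, g.1 ≠ tp)
    (hsound : SoundLab I lf tp R Sred)
    (N : ℕ) (hN : ∀ lr ∈ R, HoldsAtDepth I N lr) :
    (∀ s t : Tm F ar Empty, tpFree tp s → tpFree tp t → OStep R s t →
      ∃ m ≤ N, ∃ u : Tm (DSym F L A) (dar ar) Empty,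
        MuStep (DLorg I lf R) (dlMu Sred) (embL (glab I lf (topT tp s))) u ∧
        itN (MuStep (DLprp I lf R Sred) (dlMu Sred)) m u
          (embL (glab I lf (topT tp t)))) ∧
    (NoInf (MuStep (DLorg I lf R ∪ DLprp I lf R Sred) (dlMu Sred) :
        Tm (DSym F L A) (dar ar) ℕ → Tm (DSym F L A) (dar ar) ℕ → Prop) →
      OGTtp R tp) :=
  dl_sound_general I lf tp htp htpconst R Sred hSred hsound N hN

end Stmt
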